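/- arXiv:1212.5834 — 5 statements merged into one kernel-verified Lean document; each statement's English description precedes it below -/
import Mathlib

section
/- Let I ⊆ ℝ be an open interval and x,y,t,a,b : I → ℝ smooth with a² + b² = 1 on I, and let σ be the associated straight ruled surface patch with function η. Then the horizontal normal components of σ satisfy (N₁, N₂)(s,v) = η(s,v)·(−b(s), a(s)) for all (s,v) ∈ I × ℝ. In particular, a point (s,v) is a characteristic point of σ if and only if η(s,v) = 0. -/
/-- Partial derivative in the first variable. -/
noncomputable def pu (f : ℝ × ℝ → ℝ) (p : ℝ × ℝ) : ℝ := deriv (fun u => f (u, p.2)) p.1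

/-- Partial derivative in the second variable. -/
noncomputable def pv (f : ℝ × ℝ → ℝ) (p : ℝ × ℝ) : ℝ := deriv (fun v => f (p.1, v)) p.2

/-- Jacobian ∂(f,g) = f_u g_v − f_v g_u. -/
noncomputable def jac (f g : ℝ × ℝ → ℝ) (p : ℝ × ℝ) : ℝ :=
  pu f p * pv g p - pv f p * pu g p

/-- First component of the horizontal normal: N₁ = ∂(y,t) + 2y ∂(x,y). -/
noncomputable def N1 (x y t : ℝ × ℝ → ℝ) (p : ℝ × ℝ) : ℝ :=
  jac y t p + 2 * y p * jac x y p

/-- Second component of the horizontal normal: N₂ = ∂(t,x) − 2x ∂(x,y). -/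
noncomputable def N2 (x y t : ℝ × ℝ → ℝ) (p : ℝ × ℝ) : ℝ :=
  jac t x p - 2 * x p * jac x y p

/-- First component of the straight ruled surface patch. -/
def srX (x a : ℝ → ℝ) (p : ℝ × ℝ) : ℝ := x p.1 + p.2 * a p.1

/-- Second component of the straight ruled surface patch. -/
def srY (y b : ℝ → ℝ) (p : ℝ × ℝ) : ℝ := y p.1 + p.2 * b p.1

/-- Third component of the straight ruled surface patch. -/
def srT (x y t a b : ℝ → ℝ) (p : ℝ × ℝ) : ℝ :=
  t p.1 + 2 * p.2 * (y p.1 * a p.1 - x p.1 * b p.1)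

/-- The function η associated to a straight ruled surface patch. -/
noncomputable def eta (x y t a b : ℝ → ℝ) (p : ℝ × ℝ) : ℝ :=
  deriv t p.1 + 2 * (x p.1 * deriv y p.1 - y p.1 * deriv x p.1)
    + 4 * p.2 * (a p.1 * deriv y p.1 - b p.1 * deriv x p.1)
    + 2 * p.2 ^ 2 * (a p.1 * deriv b p.1 - b p.1 * deriv a p.1)

/-- for a straight ruled surface patch, (N₁,N₂)(s,v) = η(s,v)·(−b(s), a(s)),
and (s,v) is characteristic iff η(s,v) = 0. -/
theorem stmt_0 (I : Set ℝ) (hI : IsOpen I)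
    (x y t a b : ℝ → ℝ)
    (hx : ContDiff ℝ (⊤ : ℕ∞) x) (hy : ContDiff ℝ (⊤ : ℕ∞) y) (ht : ContDiff ℝ (⊤ : ℕ∞) t)
    (ha : ContDiff ℝ (⊤ : ℕ∞) a) (hb : ContDiff ℝ (⊤ : ℕ∞) b)
    (hab : ∀ s ∈ I, a s ^ 2 + b s ^ 2 = 1) :
    ∀ s ∈ I, ∀ v : ℝ,
      N1 (srX x a) (srY y b) (srT x y t a b) (s, v)
          = eta x y t a b (s, v) * (-(b s)) ∧
      N2 (srX x a) (srY y b) (srT x y t a b) (s, v)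
          = eta x y t a b (s, v) * a s ∧
      ((N1 (srX x a) (srY y b) (srT x y t a b) (s, v) = 0 ∧
        N2 (srX x a) (srY y b) (srT x y t a b) (s, v) = 0)
        ↔ eta x y t a b (s, v) = 0) := by
  intro s hs v
  have dx := (hx.differentiable (by simp) s).hasDerivAt
  have dy := (hy.differentiable (by simp) s).hasDerivAt
  have dt := (ht.differentiable (by simp) s).hasDerivAt
  have da := (ha.differentiable (by simp) s).hasDerivAt
  have db := (hb.differentiable (by simp) s).hasDerivAt
  have puX : pu (srX x a) (s, v) = deriv x s + v * deriv a s := by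
    have : HasDerivAt (fun u => srX x a (u, v)) (deriv x s + v * deriv a s) s := by
      simpa [srX, mul_comm, Pi.add_def] using dx.add ((da.const_mul v))
    simpa [pu] using this.deriv
  have pvX : pv (srX x a) (s, v) = a s := by
    have : HasDerivAt (fun w => srX x a (s, w)) (a s) v := by
      simpa [srX] using ((hasDerivAt_id v).mul_const (a s)).const_add (x s)
    simpa [pv] using this.deriv
  have puY : pu (srY y b) (s, v) = deriv y s + v * deriv b s := by
    have : HasDerivAt (fun u => srY y b (u, v)) (deriv y s + v * deriv b s) s := by
      simpa [srY, mul_comm, Pi.add_def] using dy.add ((db.const_mul v))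
    simpa [pu] using this.deriv
  have pvY : pv (srY y b) (s, v) = b s := by
    have : HasDerivAt (fun w => srY y b (s, w)) (b s) v := by
      simpa [srY] using ((hasDerivAt_id v).mul_const (b s)).const_add (y s)
    simpa [pv] using this.deriv
  have puT : pu (srT x y t a b) (s, v)
      = deriv t s + 2 * v * (deriv y s * a s + y s * deriv a s
        - (deriv x s * b s + x s * deriv b s)) := by
    have : HasDerivAt (fun u => srT x y t a b (u, v))
        (deriv t s + 2 * v * (deriv y s * a s + y s * deriv a s
          - (deriv x s * b s + x s * deriv b s))) s := by
      simpa [srT, Pi.add_def] using dt.add (((dy.mul da).sub (dx.mul db)).const_mul (2 * v))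
    simpa [pu] using this.deriv
  have pvT : pv (srT x y t a b) (s, v) = 2 * (y s * a s - x s * b s) := by
    have : HasDerivAt (fun w => srT x y t a b (s, w))
        (2 * (y s * a s - x s * b s)) v := by
      have h := (((hasDerivAt_id v).const_mul 2).mul_const (y s * a s - x s * b s)).const_add (t s)
      simpa [srT, mul_assoc] using h
    simpa [pv] using this.deriv
  have hN1 : N1 (srX x a) (srY y b) (srT x y t a b) (s, v)
      = eta x y t a b (s, v) * (-(b s)) := by
    simp only [N1, jac, eta, puX, pvX, puY, pvY, puT, pvT, srX, srY]
    ring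
  have hN2 : N2 (srX x a) (srY y b) (srT x y t a b) (s, v)
      = eta x y t a b (s, v) * a s := by
    simp only [N2, jac, eta, puX, pvX, puY, pvY, puT, pvT, srX, srY]
    ring
  refine ⟨hN1, hN2, ?_⟩
  rw [hN1, hN2]
  constructor
  · rintro ⟨h1, h2⟩
    have hab' := hab s hs
    nlinarith [sq_nonneg (eta x y t a b (s, v)), mul_self_nonneg (eta x y t a b (s, v))]
  · rintro h
    simp [h]
end

section
/- Let I ⊆ ℝ be an open interval and x,y,t,a,b : I → ℝ smooth with a² + b² = 1, and let σ = (x̃, ỹ, t̃) be the associated straight ruled surface patch with function η. At every point (s,v) ∈ I × ℝ with η(s,v) ≠ 0, define the unit horizontal normal (ν₁, ν₂) = (N₁, N₂)/√(N₁² + N₂²) (computed from σ). Then ∂(ν₁, ỹ) + ∂(x̃, ν₂) = 0 at every such point; in particular, at every point where moreover ∂(x̃, ỹ) ≠ 0, the horizontal mean curvature H^h = (∂(ν₁, ỹ) + ∂(x̃, ν₂))/∂(x̃, ỹ) of σ vanishes. (Straight ruled surfaces are H-minimal.) -/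
/-- First component of the unit horizontal normal. -/
noncomputable def nu1 (x y t : ℝ × ℝ → ℝ) (p : ℝ × ℝ) : ℝ :=
  N1 x y t p / Real.sqrt (N1 x y t p ^ 2 + N2 x y t p ^ 2)

/-- Second component of the unit horizontal normal. -/
noncomputable def nu2 (x y t : ℝ × ℝ → ℝ) (p : ℝ × ℝ) : ℝ :=
  N2 x y t p / Real.sqrt (N1 x y t p ^ 2 + N2 x y t p ^ 2)

open Filter Topology

section helper
variable {x y t a b : ℝ → ℝ}

lemma pu_srX (hx : Differentiable ℝ x) (ha : Differentiable ℝ a) (p : ℝ × ℝ) :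
    pu (srX x a) p = deriv x p.1 + p.2 * deriv a p.1 := by
  have h : HasDerivAt (fun u => x u + p.2 * a u) (deriv x p.1 + p.2 * deriv a p.1) p.1 :=
    ((hx p.1).hasDerivAt).add (((ha p.1).hasDerivAt).const_mul p.2)
  simpa [pu, srX] using h.deriv

lemma pv_srX (p : ℝ × ℝ) : pv (srX x a) p = a p.1 := by
  have h : HasDerivAt (fun v : ℝ => x p.1 + v * a p.1) (1 * a p.1) p.2 :=
    ((hasDerivAt_id p.2).mul_const (a p.1)).const_add (x p.1)
  simpa [pv, srX] using h.deriv

lemma pu_srT (hx : Differentiable ℝ x) (hy : Differentiable ℝ y) (ht : Differentiable ℝ t)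
    (ha : Differentiable ℝ a) (hb : Differentiable ℝ b) (p : ℝ × ℝ) :
    pu (srT x y t a b) p = deriv t p.1 + 2 * p.2 *
      ((deriv y p.1 * a p.1 + y p.1 * deriv a p.1)
        - (deriv x p.1 * b p.1 + x p.1 * deriv b p.1)) := by
  have h : HasDerivAt (fun u => t u + 2 * p.2 * (y u * a u - x u * b u))
      (deriv t p.1 + 2 * p.2 * ((deriv y p.1 * a p.1 + y p.1 * deriv a p.1)
        - (deriv x p.1 * b p.1 + x p.1 * deriv b p.1))) p.1 :=
    ((ht p.1).hasDerivAt).add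
      ((((hy p.1).hasDerivAt.mul (ha p.1).hasDerivAt).sub
        ((hx p.1).hasDerivAt.mul (hb p.1).hasDerivAt)).const_mul (2 * p.2))
  simpa [pu, srT] using h.deriv

lemma pv_srT (p : ℝ × ℝ) :
    pv (srT x y t a b) p = 2 * (y p.1 * a p.1 - x p.1 * b p.1) := by
  have h : HasDerivAt (fun v : ℝ => t p.1 + 2 * v * (y p.1 * a p.1 - x p.1 * b p.1))
      ((2 * 1) * (y p.1 * a p.1 - x p.1 * b p.1)) p.2 :=
    (((hasDerivAt_id p.2).const_mul 2).mul_const _).const_add (t p.1)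
  simpa [pv, srT] using h.deriv

lemma hN1eq (hx : Differentiable ℝ x) (hy : Differentiable ℝ y) (ht : Differentiable ℝ t)
    (ha : Differentiable ℝ a) (hb : Differentiable ℝ b) (p : ℝ × ℝ) :
    N1 (srX x a) (srY y b) (srT x y t a b) p = -(b p.1) * eta x y t a b p := by
  have h1 := pu_srX hx ha p
  have h2 := pv_srX (x := x) (a := a) p
  have h3 : pu (srY y b) p = deriv y p.1 + p.2 * deriv b p.1 := pu_srX hy hb p
  have h4 : pv (srY y b) p = b p.1 := pv_srX p
  have h5 := pu_srT hx hy ht ha hb p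
  have h6 := pv_srT (x := x) (y := y) (t := t) (a := a) (b := b) p
  simp only [N1, jac, h1, h2, h3, h4, h5, h6, srY, eta]
  ring

lemma hN2eq (hx : Differentiable ℝ x) (hy : Differentiable ℝ y) (ht : Differentiable ℝ t)
    (ha : Differentiable ℝ a) (hb : Differentiable ℝ b) (p : ℝ × ℝ) :
    N2 (srX x a) (srY y b) (srT x y t a b) p = a p.1 * eta x y t a b p := by
  have h1 := pu_srX hx ha p
  have h2 := pv_srX (x := x) (a := a) p
  have h3 : pu (srY y b) p = deriv y p.1 + p.2 * deriv b p.1 := pu_srX hy hb p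
  have h4 : pv (srY y b) p = b p.1 := pv_srX p
  have h5 := pu_srT hx hy ht ha hb p
  have h6 := pv_srT (x := x) (y := y) (t := t) (a := a) (b := b) p
  simp only [N2, jac, h1, h2, h3, h4, h5, h6, srX, eta]
  ring

lemma eta_cont (hx : ContDiff ℝ (⊤ : ℕ∞) x) (hy : ContDiff ℝ (⊤ : ℕ∞) y) (ht : ContDiff ℝ (⊤ : ℕ∞) t)
    (ha : ContDiff ℝ (⊤ : ℕ∞) a) (hb : ContDiff ℝ (⊤ : ℕ∞) b) :
    Continuous (eta x y t a b) := by
  have cx := hx.continuous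
  have cy := hy.continuous
  have ca := ha.continuous
  have cb := hb.continuous
  have cdx := hx.continuous_deriv (by simp)
  have cdy := hy.continuous_deriv (by simp)
  have cdt := ht.continuous_deriv (by simp)
  have cda := ha.continuous_deriv (by simp)
  have cdb := hb.continuous_deriv (by simp)
  unfold eta
  fun_prop

end helper

/-- on a straight ruled surface patch, at every non characteristic point
(η ≠ 0) one has ∂(ν₁,ỹ) + ∂(x̃,ν₂) = 0; in particular where also ∂(x̃,ỹ) ≠ 0 the
horizontal mean curvature H^h = (∂(ν₁,ỹ) + ∂(x̃,ν₂))/∂(x̃,ỹ) vanishes: straight ruled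
surfaces are H-minimal. -/
theorem stmt_2 (I : Set ℝ) (hI : IsOpen I)
    (x y t a b : ℝ → ℝ)
    (hx : ContDiff ℝ (⊤ : ℕ∞) x) (hy : ContDiff ℝ (⊤ : ℕ∞) y) (ht : ContDiff ℝ (⊤ : ℕ∞) t)
    (ha : ContDiff ℝ (⊤ : ℕ∞) a) (hb : ContDiff ℝ (⊤ : ℕ∞) b)
    (hab : ∀ s ∈ I, a s ^ 2 + b s ^ 2 = 1) :
    ∀ s ∈ I, ∀ v : ℝ, eta x y t a b (s, v) ≠ 0 →
      jac (nu1 (srX x a) (srY y b) (srT x y t a b)) (srY y b) (s, v)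
        + jac (srX x a) (nu2 (srX x a) (srY y b) (srT x y t a b)) (s, v) = 0 ∧
      (jac (srX x a) (srY y b) (s, v) ≠ 0 →
        (jac (nu1 (srX x a) (srY y b) (srT x y t a b)) (srY y b) (s, v)
          + jac (srX x a) (nu2 (srX x a) (srY y b) (srT x y t a b)) (s, v))
          / jac (srX x a) (srY y b) (s, v) = 0) := by
  intro s hs v hη
  have hxd := hx.differentiable (by simp)
  have hyd := hy.differentiable (by simp)
  have htd := ht.differentiable (by simp)
  have had := ha.differentiable (by simp)
  have hbd := hb.differentiable (by simp)
  set c : ℝ := eta x y t a b (s, v) with hc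
  set sg : ℝ := if 0 < c then 1 else -1 with hsg
  have hsg2 : sg * sg = 1 := by
    rcases le_or_gt c 0 with h | h <;> simp [hsg, h, not_lt.mpr, h.not_gt] <;> norm_num
  -- the open set where things are nice
  set U : Set (ℝ × ℝ) := (Prod.fst ⁻¹' I) ∩ {p | 0 < sg * eta x y t a b p} with hU
  have hUopen : IsOpen U :=
    (hI.preimage continuous_fst).inter
      (isOpen_lt continuous_const (continuous_const.mul (eta_cont hx hy ht ha hb)))
  have hpU : (s, v) ∈ U := by
    refine ⟨hs, ?_⟩
    rcases lt_or_gt_of_ne hη with h | h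
    · have : ¬ (0 < c) := not_lt.mpr h.le
      simp only [Set.mem_setOf_eq, hsg, this, if_false]
      nlinarith
    · simp only [Set.mem_setOf_eq, hsg, h, if_true]
      simpa using h
  -- formulas for nu1, nu2 on U
  have habs : ∀ p ∈ U, Real.sqrt ((eta x y t a b p) ^ 2) = sg * eta x y t a b p := by
    intro p hp
    rw [Real.sqrt_sq_eq_abs]
    have hp2 := hp.2
    by_cases h : 0 < c
    · simp only [hsg, h, if_true, Set.mem_setOf_eq, one_mul] at hp2 ⊢
      rw [abs_of_pos hp2]
    · simp only [hsg, h, if_false, Set.mem_setOf_eq, neg_mul, one_mul] at hp2 ⊢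
      rw [abs_of_neg (by linarith)]
  have hsum : ∀ p ∈ U, N1 (srX x a) (srY y b) (srT x y t a b) p ^ 2
      + N2 (srX x a) (srY y b) (srT x y t a b) p ^ 2 = (eta x y t a b p) ^ 2 := by
    intro p hp
    rw [hN1eq hxd hyd htd had hbd, hN2eq hxd hyd htd had hbd]
    linear_combination (eta x y t a b p) ^ 2 * hab p.1 hp.1
  have hnu1 : ∀ p ∈ U, nu1 (srX x a) (srY y b) (srT x y t a b) p = -sg * b p.1 := by
    intro p hp
    have hne : sg * eta x y t a b p ≠ 0 := ne_of_gt hp.2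
    simp only [nu1]
    rw [hsum p hp, habs p hp, hN1eq hxd hyd htd had hbd, div_eq_iff hne]
    linear_combination (b p.1 * eta x y t a b p) * hsg2
  have hnu2 : ∀ p ∈ U, nu2 (srX x a) (srY y b) (srT x y t a b) p = sg * a p.1 := by
    intro p hp
    have hne : sg * eta x y t a b p ≠ 0 := ne_of_gt hp.2
    simp only [nu2]
    rw [hsum p hp, habs p hp, hN2eq hxd hyd htd had hbd, div_eq_iff hne]
    linear_combination (-(a p.1) * eta x y t a b p) * hsg2
  -- eventual equalities along the axes through (s,v)
  have hmemU : U ∈ 𝓝 (s, v) := hUopen.mem_nhds hpU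
  have hev1 : (fun u => nu1 (srX x a) (srY y b) (srT x y t a b) (u, v))
      =ᶠ[𝓝 s] fun u => -sg * b u := by
    have hcont : ContinuousAt (fun u : ℝ => (u, v)) s :=
      (continuous_id.prodMk continuous_const).continuousAt
    filter_upwards [hcont.preimage_mem_nhds hmemU] with u hu
    exact hnu1 _ hu
  have hev1' : (fun w => nu1 (srX x a) (srY y b) (srT x y t a b) (s, w))
      =ᶠ[𝓝 v] fun _ => -sg * b s := by
    have hcont : ContinuousAt (fun w : ℝ => (s, w)) v :=
      (continuous_const.prodMk continuous_id).continuousAt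
    filter_upwards [hcont.preimage_mem_nhds hmemU] with w hw
    exact hnu1 _ hw
  have hev2 : (fun u => nu2 (srX x a) (srY y b) (srT x y t a b) (u, v))
      =ᶠ[𝓝 s] fun u => sg * a u := by
    have hcont : ContinuousAt (fun u : ℝ => (u, v)) s :=
      (continuous_id.prodMk continuous_const).continuousAt
    filter_upwards [hcont.preimage_mem_nhds hmemU] with u hu
    exact hnu2 _ hu
  have hev2' : (fun w => nu2 (srX x a) (srY y b) (srT x y t a b) (s, w))
      =ᶠ[𝓝 v] fun _ => sg * a s := by
    have hcont : ContinuousAt (fun w : ℝ => (s, w)) v :=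
      (continuous_const.prodMk continuous_id).continuousAt
    filter_upwards [hcont.preimage_mem_nhds hmemU] with w hw
    exact hnu2 _ hw
  -- derivatives of the unit normal components
  have hpu1 : pu (nu1 (srX x a) (srY y b) (srT x y t a b)) (s, v) = -sg * deriv b s := by
    have := hev1.deriv_eq
    simp only [pu]
    rw [this]
    exact (((hbd s).hasDerivAt).const_mul (-sg)).deriv
  have hpv1 : pv (nu1 (srX x a) (srY y b) (srT x y t a b)) (s, v) = 0 := by
    simp only [pv]
    rw [hev1'.deriv_eq]
    exact deriv_const _ _
  have hpu2 : pu (nu2 (srX x a) (srY y b) (srT x y t a b)) (s, v) = sg * deriv a s := by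
    simp only [pu]
    rw [hev2.deriv_eq]
    exact (((had s).hasDerivAt).const_mul sg).deriv
  have hpv2 : pv (nu2 (srX x a) (srY y b) (srT x y t a b)) (s, v) = 0 := by
    simp only [pv]
    rw [hev2'.deriv_eq]
    exact deriv_const _ _
  -- a a' + b b' = 0
  have hab' : a s * deriv a s + b s * deriv b s = 0 := by
    have h1 : HasDerivAt (fun u => a u ^ 2 + b u ^ 2)
        ((2 : ℕ) * a s ^ 1 * deriv a s + (2 : ℕ) * b s ^ 1 * deriv b s) s :=
      (((had s).hasDerivAt).pow 2).add (((hbd s).hasDerivAt).pow 2)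
    have h2 : HasDerivAt (fun u => a u ^ 2 + b u ^ 2) 0 s := by
      refine (hasDerivAt_const s (1 : ℝ)).congr_of_eventuallyEq ?_
      filter_upwards [hI.mem_nhds hs] with u hu
      exact hab u hu
    have h3 := h1.unique h2
    push_cast at h3
    nlinarith [h3]
  have hY4 : pv (srY y b) (s, v) = b s := pv_srX (x := y) (a := b) (s, v)
  have hX2 : pv (srX x a) (s, v) = a s := pv_srX (x := x) (a := a) (s, v)
  have hmain : jac (nu1 (srX x a) (srY y b) (srT x y t a b)) (srY y b) (s, v)
      + jac (srX x a) (nu2 (srX x a) (srY y b) (srT x y t a b)) (s, v) = 0 := by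
    simp only [jac, hpu1, hpv1, hpu2, hpv2, hY4, hX2]
    linear_combination (-sg) * hab'
  exact ⟨hmain, fun _ => by rw [hmain, zero_div]⟩
end

section
/- Let U ⊆ ℝ² be open and σ = (x,y,t) : U → ℝ³ a C¹ map whose differential has rank 2 everywhere (σ_u and σ_v linearly independent at every point). Then the identities N₁ = B·y_u − A·y_v and N₂ = A·x_v − B·x_u hold on U, and for every (u,v) ∈ U one has (A,B)(u,v) = (0,0) if and only if (N₁,N₂)(u,v) = (0,0). (The characteristic locus of a regular surface is exactly the zero set of its induced 1-form ω_σ.) -/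
/-- Coefficient A of the induced 1-form ω_σ = A du + B dv, A = t_u + 2x y_u − 2y x_u. -/
noncomputable def Aform (x y t : ℝ × ℝ → ℝ) (p : ℝ × ℝ) : ℝ :=
  pu t p + 2 * x p * pu y p - 2 * y p * pu x p

/-- Coefficient B of the induced 1-form ω_σ = A du + B dv, B = t_v + 2x y_v − 2y x_v. -/
noncomputable def Bform (x y t : ℝ × ℝ → ℝ) (p : ℝ × ℝ) : ℝ :=
  pv t p + 2 * x p * pv y p - 2 * y p * pv x p

/-- for a C¹ patch σ = (x,y,t) of rank 2, N₁ = B y_u − A y_v and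
N₂ = A x_v − B x_u, and (A,B) = (0,0) iff (N₁,N₂) = (0,0): the characteristic locus is
exactly the zero set of the induced 1-form ω_σ. -/
theorem stmt_9 (U : Set (ℝ × ℝ)) (hU : IsOpen U)
    (x y t : ℝ × ℝ → ℝ)
    (hx : ContDiffOn ℝ 1 x U) (hy : ContDiffOn ℝ 1 y U) (ht : ContDiffOn ℝ 1 t U)
    (hrank : ∀ p ∈ U, LinearIndependent ℝ
      ![((pu x p, pu y p, pu t p) : ℝ × ℝ × ℝ), ((pv x p, pv y p, pv t p) : ℝ × ℝ × ℝ)]) :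
    ∀ p ∈ U,
      N1 x y t p = Bform x y t p * pu y p - Aform x y t p * pv y p ∧
      N2 x y t p = Aform x y t p * pv x p - Bform x y t p * pu x p ∧
      ((Aform x y t p = 0 ∧ Bform x y t p = 0) ↔ (N1 x y t p = 0 ∧ N2 x y t p = 0)) := by
  intro p hp
  have h1 : N1 x y t p = Bform x y t p * pu y p - Aform x y t p * pv y p := by
    simp only [N1, Bform, Aform, jac]; ring
  have h2 : N2 x y t p = Aform x y t p * pv x p - Bform x y t p * pu x p := by
    simp only [N2, Bform, Aform, jac]; ring
  have h3 : Bform x y t p * pu t p - Aform x y t p * pv t p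
      = -(2 * x p) * N1 x y t p - 2 * y p * N2 x y t p := by
    simp only [N1, N2, Bform, Aform, jac]; ring
  refine ⟨h1, h2, ⟨fun ⟨hA, hB⟩ => by constructor <;> [rw [h1]; rw [h2]] <;>
    rw [hA, hB] <;> ring, fun ⟨hN1, hN2⟩ => ?_⟩⟩
  have key := (LinearIndependent.pair_iff.mp (hrank p hp))
    (Bform x y t p) (-(Aform x y t p)) ?_
  · exact ⟨by linarith [key.2], key.1⟩
  · have e1 : Bform x y t p * pu x p - Aform x y t p * pv x p = 0 := by
      rw [hN2] at h2; linarith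
    have e2 : Bform x y t p * pu y p - Aform x y t p * pv y p = 0 := by
      rw [hN1] at h1; linarith
    have e3 : Bform x y t p * pu t p - Aform x y t p * pv t p = 0 := by
      rw [h3, hN1, hN2]; ring
    simp only [Prod.smul_mk, smul_eq_mul, Prod.mk_add_mk, Prod.mk_eq_zero]
    refine ⟨by linarith, by linarith, by linarith⟩
end

section
/- Let U ⊆ ℝ² be open and σ = (x,y,t) : U → ℝ³ a C¹ map, and let (u₀,v₀) ∈ U be a noncharacteristic point. With ‖N^h‖ = √(N₁² + N₂²), set α = A/‖N^h‖ and β = B/‖N^h‖ near (u₀,v₀), and let (ν₁,ν₂) = (N₁,N₂)/‖N^h‖. Then β·σ_u − α·σ_v = (−ν₂, ν₁, −2yν₂ − 2xν₁) as vectors of ℝ³; that is, the pushforward under σ of the vector field β ∂/∂u − α ∂/∂v (which spans the kernel of ω_σ) equals 𝕁ν^h = −ν₂X + ν₁Y. In particular, β y_u − α y_v = ν₁ and β x_u − α x_v = −ν₂. -/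
/-- at a noncharacteristic point, with ‖N^h‖ = √(N₁²+N₂²), α = A/‖N^h‖,
β = B/‖N^h‖ and (ν₁,ν₂) = (N₁,N₂)/‖N^h‖, the pushforward β·σ_u − α·σ_v equals
𝕁ν^h = (−ν₂, ν₁, −2yν₂ − 2xν₁) as a vector of ℝ³; in particular β y_u − α y_v = ν₁ and
β x_u − α x_v = −ν₂. -/
theorem stmt_11 (U : Set (ℝ × ℝ)) (hU : IsOpen U)
    (x y t : ℝ × ℝ → ℝ)
    (hx : ContDiffOn ℝ 1 x U) (hy : ContDiffOn ℝ 1 y U) (ht : ContDiffOn ℝ 1 t U)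
    (p₀ : ℝ × ℝ) (hp₀ : p₀ ∈ U)
    (hnc : ¬(N1 x y t p₀ = 0 ∧ N2 x y t p₀ = 0)) :
    (Bform x y t p₀ / Real.sqrt (N1 x y t p₀ ^ 2 + N2 x y t p₀ ^ 2)) * pu x p₀
        - (Aform x y t p₀ / Real.sqrt (N1 x y t p₀ ^ 2 + N2 x y t p₀ ^ 2)) * pv x p₀
      = -(N2 x y t p₀ / Real.sqrt (N1 x y t p₀ ^ 2 + N2 x y t p₀ ^ 2)) ∧
    (Bform x y t p₀ / Real.sqrt (N1 x y t p₀ ^ 2 + N2 x y t p₀ ^ 2)) * pu y p₀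
        - (Aform x y t p₀ / Real.sqrt (N1 x y t p₀ ^ 2 + N2 x y t p₀ ^ 2)) * pv y p₀
      = N1 x y t p₀ / Real.sqrt (N1 x y t p₀ ^ 2 + N2 x y t p₀ ^ 2) ∧
    (Bform x y t p₀ / Real.sqrt (N1 x y t p₀ ^ 2 + N2 x y t p₀ ^ 2)) * pu t p₀
        - (Aform x y t p₀ / Real.sqrt (N1 x y t p₀ ^ 2 + N2 x y t p₀ ^ 2)) * pv t p₀
      = -2 * y p₀ * (N2 x y t p₀ / Real.sqrt (N1 x y t p₀ ^ 2 + N2 x y t p₀ ^ 2))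
        - 2 * x p₀ * (N1 x y t p₀ / Real.sqrt (N1 x y t p₀ ^ 2 + N2 x y t p₀ ^ 2)) := by
  refine ⟨?_, ?_, ?_⟩ <;>
  · unfold Bform Aform N1 N2 jac
    ring
end

section
/- Let σ(u,v) = (u cos v, u sin v, u) for u < 0 and v ∈ (0, 2π) (the lower part of the cone x² + y² = t²). Then: (i) ∂(x,y)(u,v) = u ≠ 0 and the horizontal normal components are N₁ = −u(cos v − 2u sin v) and N₂ = −u(sin v + 2u cos v), with N₁² + N₂² = u²(1 + 4u²) > 0, so no point is characteristic; (ii) the unit horizontal normal is (ν₁, ν₂) = ((cos v − 2u sin v)/√(1+4u²), (sin v + 2u cos v)/√(1+4u²)); (iii) the horizontal mean curvature is H^h = (∂(ν₁, y) + ∂(x, ν₂))/∂(x,y) = 1/(u(1+4u²)^{3/2}). In particular the cone has empty characteristic locus but nonzero, nonconstant horizontal mean curvature, so it is not a straight ruled surface in the Heisenberg group. -/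
/-- The lower cone patch σ(u,v) = (u cos v, u sin v, u): first component. -/
noncomputable def coneX (p : ℝ × ℝ) : ℝ := p.1 * Real.cos p.2

/-- The lower cone patch: second component. -/
noncomputable def coneY (p : ℝ × ℝ) : ℝ := p.1 * Real.sin p.2

/-- The lower cone patch: third component. -/
def coneT (p : ℝ × ℝ) : ℝ := p.1

/-!
On the cone `N = -u (e₁, e₂)` with `e₁ = cos v - 2u sin v`, `e₂ = sin v + 2u cos v` and
`e₁² + e₂² = 1 + 4u² = R²`. Hence on the open half-plane `u < 0` the unit horizontal normal agrees
with the smooth map `(e₁, e₂) / R`, and its partial derivatives can be read off this closed form.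
As `∂ᵥ e₁ = -e₂` and `∂ᵥ e₂ = e₁`, the `v`-derivatives contribute `(e₁ cos v + e₂ sin v) / R = 1 / R`
to `∂(ν₁, y) + ∂(x, ν₂)`, and the `u`-derivatives, through `∂ᵤ (1 / R) = -4u / R³`, contribute
`-4u² / R³`. The sum is `(R² - 4u²) / R³ = 1 / R³`, and `∂(x, y) = u`.
-/

open Real Filter Topology

section PartialDerivatives

variable {f g : ℝ × ℝ → ℝ} {p : ℝ × ℝ}

lemma pu_eq_of_hasDerivAt {f' : ℝ} (h : HasDerivAt (fun u => f (u, p.2)) f' p.1) :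
    pu f p = f' :=
  h.deriv

lemma pv_eq_of_hasDerivAt {f' : ℝ} (h : HasDerivAt (fun v => f (p.1, v)) f' p.2) :
    pv f p = f' :=
  h.deriv

lemma pu_congr_of_eventuallyEq (h : f =ᶠ[𝓝 p] g) : pu f p = pu g p := by
  have hline : Tendsto (fun u : ℝ => (u, p.2)) (𝓝 p.1) (𝓝 p) :=
    (Continuous.prodMk_left p.2).tendsto' _ _ rfl
  exact (h.comp_tendsto hline).deriv_eq

lemma pv_congr_of_eventuallyEq (h : f =ᶠ[𝓝 p] g) : pv f p = pv g p := by
  have hline : Tendsto (fun v : ℝ => (p.1, v)) (𝓝 p.2) (𝓝 p) :=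
    (Continuous.prodMk_right p.1).tendsto' _ _ rfl
  exact (h.comp_tendsto hline).deriv_eq

end PartialDerivatives

lemma hasDerivAt_add_two_mul_div_sqrt (a b u : ℝ) :
    HasDerivAt (fun u => (a + 2 * u * b) / √(1 + 4 * u ^ 2))
      ((2 * b - 4 * u * a) / √(1 + 4 * u ^ 2) ^ 3) u := by
  have hpos : 0 < 1 + 4 * u ^ 2 := by positivity
  have hnum : HasDerivAt (fun u => a + 2 * u * b) (2 * b) u := by
    simpa using (((hasDerivAt_id u).const_mul 2).mul_const b).const_add a
  have hrad : HasDerivAt (fun u => 1 + 4 * u ^ 2) (8 * u) u :=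
    (((hasDerivAt_pow 2 u).const_mul 4).const_add 1).congr_deriv (by ring)
  refine (hnum.div (hrad.sqrt hpos.ne') (sqrt_pos.mpr hpos).ne').congr_deriv ?_
  field_simp
  linear_combination 4 * b * sq_sqrt hpos.le

section Cone

variable (p : ℝ × ℝ)

lemma pu_coneX : pu coneX p = cos p.2 :=
  pu_eq_of_hasDerivAt (by simpa [coneX] using (hasDerivAt_id p.1).mul_const (cos p.2))

lemma pv_coneX : pv coneX p = -(p.1 * sin p.2) :=
  pv_eq_of_hasDerivAt (by simpa [coneX] using (hasDerivAt_cos p.2).const_mul p.1)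

lemma pu_coneY : pu coneY p = sin p.2 :=
  pu_eq_of_hasDerivAt (by simpa [coneY] using (hasDerivAt_id p.1).mul_const (sin p.2))

lemma pv_coneY : pv coneY p = p.1 * cos p.2 :=
  pv_eq_of_hasDerivAt ((hasDerivAt_sin p.2).const_mul p.1)

lemma pu_coneT : pu coneT p = 1 := by simp [pu, coneT]

lemma pv_coneT : pv coneT p = 0 := by simp [pv, coneT]

lemma jac_coneX_coneY : jac coneX coneY p = p.1 := by
  simp only [jac, pu_coneX, pv_coneY, pv_coneX, pu_coneY]
  linear_combination p.1 * sin_sq_add_cos_sq p.2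

lemma N1_cone : N1 coneX coneY coneT p = -p.1 * (cos p.2 - 2 * p.1 * sin p.2) := by
  rw [N1, jac_coneX_coneY]
  simp only [jac, pu_coneY, pv_coneT, pv_coneY, pu_coneT, coneY]
  ring

lemma N2_cone : N2 coneX coneY coneT p = -p.1 * (sin p.2 + 2 * p.1 * cos p.2) := by
  rw [N2, jac_coneX_coneY]
  simp only [jac, pu_coneT, pv_coneX, pv_coneT, pu_coneX, coneX]
  ring

lemma N1_cone_sq_add_N2_cone_sq :
    N1 coneX coneY coneT p ^ 2 + N2 coneX coneY coneT p ^ 2 = p.1 ^ 2 * (1 + 4 * p.1 ^ 2) := by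
  rw [N1_cone, N2_cone]
  linear_combination p.1 ^ 2 * (1 + 4 * p.1 ^ 2) * sin_sq_add_cos_sq p.2

variable {p}

lemma sqrt_N1_cone_sq_add_N2_cone_sq (hp : p.1 < 0) :
    √(N1 coneX coneY coneT p ^ 2 + N2 coneX coneY coneT p ^ 2) = -p.1 * √(1 + 4 * p.1 ^ 2) := by
  rw [N1_cone_sq_add_N2_cone_sq, sqrt_mul (sq_nonneg _), sqrt_sq_eq_abs, abs_of_neg hp]

lemma nu1_cone (hp : p.1 < 0) :
    nu1 coneX coneY coneT p = (cos p.2 - 2 * p.1 * sin p.2) / √(1 + 4 * p.1 ^ 2) := by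
  rw [nu1, sqrt_N1_cone_sq_add_N2_cone_sq hp, N1_cone, mul_comm (-p.1), mul_comm (-p.1)]
  exact mul_div_mul_right _ _ (neg_ne_zero.mpr hp.ne)

lemma nu2_cone (hp : p.1 < 0) :
    nu2 coneX coneY coneT p = (sin p.2 + 2 * p.1 * cos p.2) / √(1 + 4 * p.1 ^ 2) := by
  rw [nu2, sqrt_N1_cone_sq_add_N2_cone_sq hp, N2_cone, mul_comm (-p.1), mul_comm (-p.1)]
  exact mul_div_mul_right _ _ (neg_ne_zero.mpr hp.ne)

lemma nu1_cone_eventuallyEq (hp : p.1 < 0) :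
    nu1 coneX coneY coneT =ᶠ[𝓝 p] fun q => (cos q.2 - 2 * q.1 * sin q.2) / √(1 + 4 * q.1 ^ 2) :=
  (continuous_fst.tendsto p).eventually (Iio_mem_nhds hp) |>.mono fun _ => nu1_cone

lemma nu2_cone_eventuallyEq (hp : p.1 < 0) :
    nu2 coneX coneY coneT =ᶠ[𝓝 p] fun q => (sin q.2 + 2 * q.1 * cos q.2) / √(1 + 4 * q.1 ^ 2) :=
  (continuous_fst.tendsto p).eventually (Iio_mem_nhds hp) |>.mono fun _ => nu2_cone

lemma pu_nu1_cone (hp : p.1 < 0) :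
    pu (nu1 coneX coneY coneT) p = (-2 * sin p.2 - 4 * p.1 * cos p.2) / √(1 + 4 * p.1 ^ 2) ^ 3 := by
  rw [pu_congr_of_eventuallyEq (nu1_cone_eventuallyEq hp)]
  refine pu_eq_of_hasDerivAt ?_
  convert hasDerivAt_add_two_mul_div_sqrt (cos p.2) (-sin p.2) p.1 using 1
  · ext u; ring
  · ring

lemma pu_nu2_cone (hp : p.1 < 0) :
    pu (nu2 coneX coneY coneT) p = (2 * cos p.2 - 4 * p.1 * sin p.2) / √(1 + 4 * p.1 ^ 2) ^ 3 := by
  rw [pu_congr_of_eventuallyEq (nu2_cone_eventuallyEq hp)]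
  exact pu_eq_of_hasDerivAt (hasDerivAt_add_two_mul_div_sqrt (sin p.2) (cos p.2) p.1)

lemma pv_nu1_cone (hp : p.1 < 0) :
    pv (nu1 coneX coneY coneT) p = -(sin p.2 + 2 * p.1 * cos p.2) / √(1 + 4 * p.1 ^ 2) := by
  rw [pv_congr_of_eventuallyEq (nu1_cone_eventuallyEq hp)]
  have h := ((hasDerivAt_cos p.2).sub ((hasDerivAt_sin p.2).const_mul (2 * p.1))).div_const
    √(1 + 4 * p.1 ^ 2)
  exact pv_eq_of_hasDerivAt (h.congr_deriv (by ring))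

lemma pv_nu2_cone (hp : p.1 < 0) :
    pv (nu2 coneX coneY coneT) p = (cos p.2 - 2 * p.1 * sin p.2) / √(1 + 4 * p.1 ^ 2) := by
  rw [pv_congr_of_eventuallyEq (nu2_cone_eventuallyEq hp)]
  have h := ((hasDerivAt_sin p.2).add ((hasDerivAt_cos p.2).const_mul (2 * p.1))).div_const
    √(1 + 4 * p.1 ^ 2)
  exact pv_eq_of_hasDerivAt (h.congr_deriv (by ring))

lemma horizontalMeanCurvature_cone (hp : p.1 < 0) :
    (jac (nu1 coneX coneY coneT) coneY p + jac coneX (nu2 coneX coneY coneT) p)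
        / jac coneX coneY p = 1 / (p.1 * √(1 + 4 * p.1 ^ 2) ^ 3) := by
  have hpos : 0 < 1 + 4 * p.1 ^ 2 := by positivity
  have hR : 0 < √(1 + 4 * p.1 ^ 2) := sqrt_pos.mpr hpos
  have hu : p.1 ≠ 0 := hp.ne
  rw [jac, jac, jac_coneX_coneY, pu_nu1_cone hp, pv_nu1_cone hp, pu_nu2_cone hp, pv_nu2_cone hp,
    pu_coneX, pv_coneX, pu_coneY, pv_coneY]
  field_simp
  linear_combination (√(1 + 4 * p.1 ^ 2) ^ 2 - 4 * p.1 ^ 2) * sin_sq_add_cos_sq p.2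
    + sq_sqrt hpos.le

end Cone

/-- for the lower part of the cone x² + y² = t², parametrised by
σ(u,v) = (u cos v, u sin v, u) with u < 0, v ∈ (0,2π): ∂(x,y) = u ≠ 0,
N₁ = −u(cos v − 2u sin v), N₂ = −u(sin v + 2u cos v), N₁² + N₂² = u²(1+4u²) > 0 (no
characteristic points), the unit horizontal normal is
((cos v − 2u sin v)/√(1+4u²), (sin v + 2u cos v)/√(1+4u²)), and the horizontal mean
curvature is H^h = 1/(u(1+4u²)^{3/2}): nonzero and nonconstant, so the cone is not a
straight ruled surface. -/
theorem stmt_18 :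
    ∀ p : ℝ × ℝ, p.1 < 0 → p.2 ∈ Set.Ioo 0 (2 * Real.pi) →
      jac coneX coneY p = p.1 ∧ p.1 ≠ 0 ∧
      N1 coneX coneY coneT p = -p.1 * (Real.cos p.2 - 2 * p.1 * Real.sin p.2) ∧
      N2 coneX coneY coneT p = -p.1 * (Real.sin p.2 + 2 * p.1 * Real.cos p.2) ∧
      N1 coneX coneY coneT p ^ 2 + N2 coneX coneY coneT p ^ 2
        = p.1 ^ 2 * (1 + 4 * p.1 ^ 2) ∧
      ¬(N1 coneX coneY coneT p = 0 ∧ N2 coneX coneY coneT p = 0) ∧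
      nu1 coneX coneY coneT p
        = (Real.cos p.2 - 2 * p.1 * Real.sin p.2) / Real.sqrt (1 + 4 * p.1 ^ 2) ∧
      nu2 coneX coneY coneT p
        = (Real.sin p.2 + 2 * p.1 * Real.cos p.2) / Real.sqrt (1 + 4 * p.1 ^ 2) ∧
      (jac (nu1 coneX coneY coneT) coneY p + jac coneX (nu2 coneX coneY coneT) p)
          / jac coneX coneY p
        = 1 / (p.1 * Real.sqrt (1 + 4 * p.1 ^ 2) ^ 3) := by
  intro p hp _
  have hN := N1_cone_sq_add_N2_cone_sq p
  refine ⟨jac_coneX_coneY p, hp.ne, N1_cone p, N2_cone p, hN, ?_, nu1_cone hp, nu2_cone hp,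
    horizontalMeanCurvature_cone hp⟩
  rintro ⟨h1, h2⟩
  rw [h1, h2] at hN
  nlinarith
end
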